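/- Let ℓ: ℝᵈ → ℝ be defined by ℓ(v) = max_{k ≤ K} (aₖᵀv + bₖ) for vectors aₖ ∈ ℝᵈ and scalars bₖ, let λ, θ₁ > 0, and let v̂ ∈ ℝᵈ. Then sup_{v ∈ ℝᵈ} { ℓ(v) − λθ₁‖v − v̂‖² } = max_{k ≤ K} ( aₖᵀv̂ + bₖ + ‖aₖ‖²/(4λθ₁) ), where ‖·‖ is the Euclidean norm. -/

import Mathlib

/-!
Each affine piece `v ↦ ⟪a, v⟫ + b` minus the quadratic penalty `c‖v - v̂‖²` is a concave
quadratic, maximised at `v̂ + a / (2c)` with value `⟪a, v̂⟫ + b + ‖a‖² / (4c)`; this is the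
inequality `⟪a, w⟫ ≤ c‖w‖² + ‖a‖² / (4c)` together with its equality case. Since the supremum
over `v` of a maximum over finitely many pieces is the maximum of the suprema, the transform of
`ℓ` is the maximum of the transforms of its pieces.
-/

open scoped RealInnerProductSpace

theorem real_inner_le_mul_norm_sq_add_norm_sq_div {F : Type*} [NormedAddCommGroup F]
    [InnerProductSpace ℝ F] {c : ℝ} (hc : 0 < c) (u w : F) :
    ⟪u, w⟫ ≤ c * ‖w‖ ^ 2 + ‖u‖ ^ 2 / (4 * c) := by
  have h := norm_sub_sq_real ((2 * c) • w) u
  rw [norm_smul, real_inner_smul_left, real_inner_comm, Real.norm_of_nonneg (by positivity)] at h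
  rw [← sub_le_iff_le_add', le_div_iff₀ (by positivity)]
  nlinarith [sq_nonneg ‖(2 * c) • w - u‖]

theorem isGreatest_range_inner_add_sub_mul_norm_sub_sq {F : Type*} [NormedAddCommGroup F]
    [InnerProductSpace ℝ F] {c : ℝ} (hc : 0 < c) (a x₀ : F) (b : ℝ) :
    IsGreatest (Set.range fun x => ⟪a, x⟫ + b - c * ‖x - x₀‖ ^ 2)
      (⟪a, x₀⟫ + b + ‖a‖ ^ 2 / (4 * c)) := by
  refine ⟨⟨x₀ + (2 * c)⁻¹ • a, ?_⟩, ?_⟩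
  · simp only [inner_add_right, real_inner_smul_right, real_inner_self_eq_norm_sq,
      add_sub_cancel_left, norm_smul, Real.norm_of_nonneg (inv_nonneg.2 (by positivity : 0 ≤ 2 * c))]
    field_simp
    ring
  · rintro _ ⟨x, rfl⟩
    have h := real_inner_le_mul_norm_sq_add_norm_sq_div hc a (x - x₀)
    rw [inner_sub_right] at h
    dsimp only
    linarith

theorem ciSup_ciSup_eq_ciSup_of_isGreatest {ι α : Type*} [Finite ι] [Nonempty ι] [Nonempty α]
    {f : ι → α → ℝ} {M : ι → ℝ} (hM : ∀ k, IsGreatest (Set.range (f k)) (M k)) :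
    ⨆ x, ⨆ k, f k x = ⨆ k, M k := by
  have hle : ∀ x, ⨆ k, f k x ≤ ⨆ k, M k := fun x =>
    ciSup_le fun k => ((hM k).2 ⟨x, rfl⟩).trans (le_ciSup (Set.finite_range M).bddAbove k)
  refine le_antisymm (ciSup_le hle) (ciSup_le fun k => ?_)
  obtain ⟨x, hx⟩ := (hM k).1
  calc M k = f k x := hx.symm
    _ ≤ ⨆ k, f k x := le_ciSup (Set.finite_range fun k => f k x).bddAbove k
    _ ≤ ⨆ x, ⨆ k, f k x := le_ciSup ⟨_, Set.forall_mem_range.2 hle⟩ x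

/-- Quadratic d-transform of a piecewise linear function:
`sup_v { max_k (aₖᵀv + bₖ) − λθ₁‖v − v̂‖² } = max_k ( aₖᵀv̂ + bₖ + ‖aₖ‖²/(4λθ₁) )`. -/
theorem quadratic_d_transform_piecewise_linear
    {d K : ℕ} (hK : 0 < K)
    (a : Fin K → EuclideanSpace ℝ (Fin d)) (b : Fin K → ℝ)
    (lam th1 : ℝ) (hlam : 0 < lam) (hth1 : 0 < th1)
    (vhat : EuclideanSpace ℝ (Fin d)) :
    haveI : Nonempty (Fin K) := ⟨⟨0, hK⟩⟩
    (⨆ v : EuclideanSpace ℝ (Fin d),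
        ((⨆ k : Fin K, ((inner ℝ (a k) v : ℝ) + b k)) - lam * th1 * ‖v - vhat‖ ^ 2))
      = ⨆ k : Fin K, ((inner ℝ (a k) vhat : ℝ) + b k + ‖a k‖ ^ 2 / (4 * lam * th1)) := by
  have : Nonempty (Fin K) := ⟨⟨0, hK⟩⟩
  have hsub : ∀ v : EuclideanSpace ℝ (Fin d),
      (⨆ k, ⟪a k, v⟫ + b k) - lam * th1 * ‖v - vhat‖ ^ 2
        = ⨆ k, (⟪a k, v⟫ + b k - lam * th1 * ‖v - vhat‖ ^ 2) := fun v =>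
    (OrderIso.addRight _).map_ciSup (Set.finite_range _).bddAbove
  simp only [hsub, mul_assoc 4 lam th1]
  exact ciSup_ciSup_eq_ciSup_of_isGreatest fun k =>
    isGreatest_range_inner_add_sub_mul_norm_sub_sq (mul_pos hlam hth1) (a k) vhat (b k)
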